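/- arXiv:1410.4962 — 3 statements merged into one kernel-verified Lean document; each statement's English description precedes it below -/
import Mathlib

section
/- Let ξ be a random time on a filtered measurable space (Ω, F, (F_t)) and let P, Q be probability measures on (Ω, F). Then the following are equivalent: (i) for every stopping time τ of the right-continuous filtration (F_{t+}) and every A ∈ F_{τ+}, P(A ∩ {τ < ξ}) = 0 implies Q(A ∩ {τ < ξ}) = 0; (ii) for every rational q ≥ 0 and every A ∈ F_q, P(A ∩ {q < ξ}) = 0 implies Q(A ∩ {q < ξ}) = 0. -/
open scoped ENNReal NNReal
open MeasureTheory Set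

variable {Ω : Type*} {m0 : MeasurableSpace Ω}

/-- The right-continuous filtration `F_{t+} = ⋂_{s>t} F_s`. -/
def plusFilt (F : Filtration ℝ≥0 m0) (t : ℝ≥0) : MeasurableSpace Ω :=
  ⨅ s ∈ Set.Ioi t, (F s : MeasurableSpace Ω)

/-- `τ` is a stopping time of the family of σ-fields `G`. -/
def IsStopTime (G : ℝ≥0 → MeasurableSpace Ω) (τ : Ω → ℝ≥0∞) : Prop :=
  ∀ t : ℝ≥0, MeasurableSet[G t] {ω | τ ω ≤ (t : ℝ≥0∞)}

/-- Membership in the σ-field `F_{τ+}` associated with a stopping time `τ` of `(F_{t+})`. -/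
def MemStopSigmaPlus (F : Filtration ℝ≥0 m0) (τ : Ω → ℝ≥0∞) (A : Set Ω) : Prop :=
  ∀ t : ℝ≥0, MeasurableSet[plusFilt F t] (A ∩ {ω | τ ω ≤ (t : ℝ≥0∞)})

/-- Lemma A.1: for a random time `ξ` and probabilities `P, Q`, absolute
continuity of `Q` w.r.t. `P` on `F_{τ+} ∩ {τ < ξ}` for all `(F_{t+})`-stopping times `τ`
is equivalent to the same property for deterministic rational times. -/
theorem prior_to_xi_abs_cont_countable (F : Filtration ℝ≥0 m0)
    (ξ : Ω → ℝ≥0∞) (hξ : Measurable ξ)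
    (P Q : Measure Ω) [IsProbabilityMeasure P] [IsProbabilityMeasure Q] :
    (∀ τ : Ω → ℝ≥0∞, IsStopTime (plusFilt F) τ →
      ∀ A : Set Ω, MemStopSigmaPlus F τ A →
        P (A ∩ {ω | τ ω < ξ ω}) = 0 → Q (A ∩ {ω | τ ω < ξ ω}) = 0) ↔
    (∀ q : ℚ, 0 ≤ q → ∀ A : Set Ω, MeasurableSet[F (Real.toNNReal q)] A →
        P (A ∩ {ω | (Real.toNNReal (q : ℝ) : ℝ≥0∞) < ξ ω}) = 0 →
        Q (A ∩ {ω | (Real.toNNReal (q : ℝ) : ℝ≥0∞) < ξ ω}) = 0) := by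
  classical
  constructor
  · -- stopping-time version implies rational version: use constant stopping times
    intro h q hq A hA hP
    refine h (fun _ => (Real.toNNReal (q : ℝ) : ℝ≥0∞)) ?_ A ?_ hP
    · intro t
      by_cases hqt : (Real.toNNReal (q : ℝ) : ℝ≥0∞) ≤ (t : ℝ≥0∞)
      · have : {ω : Ω | (Real.toNNReal (q : ℝ) : ℝ≥0∞) ≤ (t : ℝ≥0∞)} = univ := by
          simp [hqt]
        rw [this]; exact @MeasurableSet.univ _ (plusFilt F t)
      · have : {ω : Ω | (Real.toNNReal (q : ℝ) : ℝ≥0∞) ≤ (t : ℝ≥0∞)} = ∅ := by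
          simp [hqt]
        rw [this]; exact @MeasurableSet.empty _ (plusFilt F t)
    · intro t
      by_cases hqt : (Real.toNNReal (q : ℝ) : ℝ≥0∞) ≤ (t : ℝ≥0∞)
      · have hset : A ∩ {ω : Ω | (Real.toNNReal (q : ℝ) : ℝ≥0∞) ≤ (t : ℝ≥0∞)} = A := by
          simp [hqt]
        rw [hset]
        have hle : (F (Real.toNNReal (q : ℝ)) : MeasurableSpace Ω) ≤ plusFilt F t := by
          refine le_iInf₂ fun s hs => F.mono ?_
          exact le_trans (ENNReal.coe_le_coe.1 hqt) hs.le
        exact hle _ hA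
      · have hset : A ∩ {ω : Ω | (Real.toNNReal (q : ℝ) : ℝ≥0∞) ≤ (t : ℝ≥0∞)} = ∅ := by
          simp [hqt]
        rw [hset]; exact @MeasurableSet.empty _ (plusFilt F t)
  · -- rational version implies stopping-time version
    intro h τ hτ A hA hP
    set S : ℚ × ℚ → Set Ω := fun p =>
      if 0 ≤ p.2 ∧ Real.toNNReal (p.1 : ℝ) < Real.toNNReal (p.2 : ℝ) then
        (A ∩ {ω | τ ω ≤ (Real.toNNReal (p.1 : ℝ) : ℝ≥0∞)}) ∩
          {ω | (Real.toNNReal (p.2 : ℝ) : ℝ≥0∞) < ξ ω}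
      else ∅ with hS
    have hsub : ∀ p, S p ⊆ A ∩ {ω | τ ω < ξ ω} := by
      intro p ω hω
      by_cases hc : 0 ≤ p.2 ∧ Real.toNNReal (p.1 : ℝ) < Real.toNNReal (p.2 : ℝ)
      · rw [hS] at hω
        simp only [if_pos hc, mem_inter_iff, mem_setOf_eq] at hω
        refine ⟨hω.1.1, lt_of_le_of_lt hω.1.2 ?_⟩
        exact lt_trans (ENNReal.coe_lt_coe.2 hc.2) hω.2
      · rw [hS] at hω
        simp only [if_neg hc] at hω
        exact absurd hω (notMem_empty ω)
    have hU : A ∩ {ω | τ ω < ξ ω} = ⋃ p, S p := by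
      refine Subset.antisymm ?_ (iUnion_subset hsub)
      rintro ω ⟨hAω, hlt⟩
      simp only [mem_setOf_eq] at hlt
      obtain ⟨q', hq'0, hq'1, hq'2⟩ := ENNReal.lt_iff_exists_rat_btwn.1 hlt
      obtain ⟨q, hq0, hq1, hq2⟩ := ENNReal.lt_iff_exists_rat_btwn.1 hq'1
      refine mem_iUnion.2 ⟨(q, q'), ?_⟩
      have hc : 0 ≤ (q, q').2 ∧
          Real.toNNReal ((q, q').1 : ℝ) < Real.toNNReal ((q, q').2 : ℝ) :=
        ⟨hq'0, ENNReal.coe_lt_coe.1 hq2⟩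
      rw [hS]
      simp only [if_pos hc, mem_inter_iff, mem_setOf_eq]
      exact ⟨⟨hAω, hq1.le⟩, hq'2⟩
    have hQ : ∀ p, Q (S p) = 0 := by
      intro p
      by_cases hc : 0 ≤ p.2 ∧ Real.toNNReal (p.1 : ℝ) < Real.toNNReal (p.2 : ℝ)
      · have hSp : S p = (A ∩ {ω | τ ω ≤ (Real.toNNReal (p.1 : ℝ) : ℝ≥0∞)}) ∩
            {ω | (Real.toNNReal (p.2 : ℝ) : ℝ≥0∞) < ξ ω} := by rw [hS]; simp only [if_pos hc]
        rw [hSp]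
        refine h p.2 hc.1 _ ?_ ?_
        · have hmeas := hA (Real.toNNReal (p.1 : ℝ))
          have hle : plusFilt F (Real.toNNReal (p.1 : ℝ)) ≤
              (F (Real.toNNReal (p.2 : ℝ)) : MeasurableSpace Ω) :=
            iInf₂_le _ hc.2
          exact hle _ hmeas
        · refine measure_mono_null ?_ hP
          rw [← hSp]; exact hsub p
      · have : S p = ∅ := by rw [hS]; simp only [if_neg hc]
        rw [this]; exact measure_empty
    rw [hU]
    exact measure_iUnion_null hQ
end

section
/- Suppose Q ∼_ζ P (prior-to-ζ equivalence: Q ≪ P and P ≪ Q on F_t ∩ {t < ζ} for all t ≥ 0), and ζ = ∞ P-a.s. If (τ_n) is a nondecreasing sequence of stopping times with lim_n τ_n ≥ ζ Q-a.s., then lim_n τ_n = ∞ P-a.s. -/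
open scoped ENNReal NNReal
open MeasureTheory Set

variable {Ω : Type*} {m0 : MeasurableSpace Ω}

/-- if `Q ∼_ζ P` (mutual absolute continuity on `F_t ∩ {t < ζ}` for all
`t ≥ 0`), `ζ = ∞` `P`-a.s., and `(τ_n)` is a nondecreasing sequence of stopping times
with `lim_n τ_n ≥ ζ` `Q`-a.s., then `lim_n τ_n = ∞` `P`-a.s. -/
theorem limit_stopping_time_infinite (F : Filtration ℝ≥0 m0)
    (ζ : Ω → ℝ≥0∞) (hζstop : ∀ t : ℝ≥0, MeasurableSet[F t] {ω | ζ ω ≤ (t : ℝ≥0∞)})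
    (P Q : Measure Ω) [IsProbabilityMeasure P] [IsProbabilityMeasure Q]
    (hequiv : ∀ t : ℝ≥0, ∀ A : Set Ω, MeasurableSet[F t] A →
      (P (A ∩ {ω | (t : ℝ≥0∞) < ζ ω}) = 0 ↔ Q (A ∩ {ω | (t : ℝ≥0∞) < ζ ω}) = 0))
    (hζP : P {ω | ζ ω ≠ ∞} = 0)
    (τ : ℕ → Ω → ℝ≥0∞)
    (hτstop : ∀ n, ∀ t : ℝ≥0, MeasurableSet[F t] {ω | τ n ω ≤ (t : ℝ≥0∞)})
    (hτmono : ∀ ω, Monotone fun n => τ n ω)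
    (hlim : Q {ω | (⨆ n, τ n ω) < ζ ω} = 0) :
    P {ω | (⨆ n, τ n ω) ≠ ∞} = 0 := by
  have hmeas : ∀ t : ℝ≥0, MeasurableSet[F t] {ω | (⨆ n, τ n ω) ≤ (t : ℝ≥0∞)} := by
    intro t
    have h : {ω | (⨆ n, τ n ω) ≤ (t : ℝ≥0∞)} = ⋂ n, {ω | τ n ω ≤ (t : ℝ≥0∞)} := by
      ext ω; simp [iSup_le_iff]
    rw [h]; exact MeasurableSet.iInter fun n => hτstop n t
  have key : ∀ t : ℝ≥0,
      P ({ω | (⨆ n, τ n ω) ≤ (t : ℝ≥0∞)} ∩ {ω | (t : ℝ≥0∞) < ζ ω}) = 0 := by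
    intro t
    rw [hequiv t _ (hmeas t)]
    refine measure_mono_null ?_ hlim
    rintro ω ⟨h1, h2⟩
    show (⨆ n, τ n ω) < ζ ω
    exact lt_of_le_of_lt h1 h2
  have hsub : {ω | (⨆ n, τ n ω) ≠ ∞} ⊆ {ω | ζ ω ≠ ∞} ∪
      ⋃ n : ℕ, ({ω | (⨆ m, τ m ω) ≤ ((n : ℝ≥0) : ℝ≥0∞)} ∩ {ω | ((n : ℝ≥0) : ℝ≥0∞) < ζ ω}) := by
    intro ω hω
    by_cases hz : ζ ω = ∞
    · right
      obtain ⟨n, hn⟩ := ENNReal.exists_nat_gt hω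
      refine mem_iUnion.2 ⟨n, hn.le.trans (by norm_cast), ?_⟩
      simp [hz]
    · left; exact hz
  refine measure_mono_null hsub ?_
  refine measure_union_null hζP ?_
  exact measure_iUnion_null fun n => key n
end

section
/- The condition NA₁(𝒫) holds if and only if NA₁(P) holds for every P ∈ 𝒫, where S is a right-continuous adapted process whose paths are P-a.s. continuous for each P ∈ 𝒫. -/
/-!
A strategy that superhedges under a single `P` keeps its wealth nonnegative only `P`-a.s.; to use
it under the whole family, stop it at `min (firstNegTime X) T`, where `X` is its wealth. The wealth
starts at `x ≥ 0` and, along every continuous path of `S`, moves continuously, so it cannot jump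
below `0` before being stopped: the stopped wealth is nonnegative quasi-surely. Given cheap
`P`-superhedges of `f`, the event on which none of them is stopped before `T` and all of them
dominate `f` has full `P`-measure, and `f` restricted to it is superhedged cheaply under every
measure of the family; `NA₁(𝒫)` makes it vanish quasi-surely, hence `f = 0` `P`-a.s. Conversely,
a superhedge under the family is one under each `P`.
-/

open scoped ENNReal NNReal
open MeasureTheory Set

variable {Ω : Type*} {m0 : MeasurableSpace Ω}

/-- A simple predictable strategy `H = Σ_{i=1}^n h_i 1_{(τ_{i-1},τ_i]}` with `h_i`
`F_{τ_{i-1}+}`-measurable and `(τ_i)` a nondecreasing sequence of `(F_{t+})`-stopping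
times with `τ_0 = 0`. -/
structure SimpleStrategy (F : Filtration ℝ≥0 m0) (d : ℕ) where
  n : ℕ
  τ : ℕ → Ω → ℝ≥0∞
  h : ℕ → Ω → Fin d → ℝ
  tau_zero : ∀ ω, τ 0 ω = 0
  tau_mono : ∀ ω, Monotone fun i => τ i ω
  tau_stop : ∀ i, IsStopTime (plusFilt F) (τ i)
  h_meas : ∀ i, ∀ B : Set (Fin d → ℝ), MeasurableSet B →
    MemStopSigmaPlus F (τ i) {ω | h i ω ∈ B}

/-- The wealth process `X^{x,H} = x + H • S`. -/
noncomputable def wealth {F : Filtration ℝ≥0 m0} {d : ℕ} (S : ℝ≥0 → Ω → Fin d → ℝ)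
    (x : ℝ) (H : SimpleStrategy F d) (t : ℝ≥0) (ω : Ω) : ℝ :=
  x + ∑ i ∈ Finset.range H.n, ∑ j : Fin d, H.h i ω j *
    (S ((min (H.τ (i + 1) ω) (t : ℝ≥0∞)).toNNReal) ω j -
      S ((min (H.τ i ω) (t : ℝ≥0∞)).toNNReal) ω j)

/-- `H ∈ H^{simp}(x)` superhedges `f` at time `T` simultaneously under all `P ∈ Ps`. -/
def Superhedges {F : Filtration ℝ≥0 m0} {d : ℕ} (S : ℝ≥0 → Ω → Fin d → ℝ)
    (Ps : Set (Measure Ω)) (x : ℝ) (H : SimpleStrategy F d) (T : ℝ≥0) (f : Ω → ℝ) : Prop :=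
  (∀ P ∈ Ps, ∀ᵐ ω ∂P, ∀ t : ℝ≥0, 0 ≤ wealth S x H t ω) ∧
  (∀ P ∈ Ps, ∀ᵐ ω ∂P, f ω ≤ wealth S x H T ω)

/-- `NA₁(Ps)`: if a nonnegative `F_T`-measurable claim `f` can be superhedged with simple
strategies at arbitrarily small initial capital (i.e. `v^{simp}(T,f) = 0`), then
`f = 0` `Ps`-q.s. -/
def NA1 {d : ℕ} (F : Filtration ℝ≥0 m0) (S : ℝ≥0 → Ω → Fin d → ℝ)
    (Ps : Set (Measure Ω)) : Prop :=
  ∀ T : ℝ≥0, ∀ f : Ω → ℝ, StronglyMeasurable[F T] f → (∀ ω, 0 ≤ f ω) →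
    (∀ ε : ℝ, 0 < ε → ∃ x : ℝ, 0 ≤ x ∧ x < ε ∧
      ∃ H : SimpleStrategy F d, Superhedges S Ps x H T f) →
    ∀ P ∈ Ps, P {ω | f ω ≠ 0} = 0

open Filter Topology

section PlusFilt

variable (F : Filtration ℝ≥0 m0)

lemma plusFilt_le_of_lt {t s : ℝ≥0} (h : t < s) : plusFilt F t ≤ F s :=
  iInf₂_le s h

lemma le_plusFilt_of_le {s t : ℝ≥0} (h : s ≤ t) : (F s : MeasurableSpace Ω) ≤ plusFilt F t :=
  le_iInf₂ fun _ hu => F.mono (h.trans (le_of_lt hu))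

lemma plusFilt_mono : Monotone (plusFilt F) :=
  fun _ _ h => le_iInf₂ fun u hu => iInf₂_le u (h.trans_lt hu)

lemma measurableSet_plusFilt {t : ℝ≥0} {A : Set Ω}
    (h : ∀ s, t < s → MeasurableSet[F s] A) : MeasurableSet[plusFilt F t] A := by
  rw [plusFilt, MeasurableSpace.measurableSet_iInf]
  exact fun s => MeasurableSpace.measurableSet_iInf.2 (h s)

end PlusFilt

section StopTime

variable {G : ℝ≥0 → MeasurableSpace Ω} {τ κ : Ω → ℝ≥0∞}

lemma isStopTime_const (c : ℝ≥0∞) : IsStopTime G fun _ => c :=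
  fun _ => MeasurableSet.const _

protected lemma IsStopTime.min (hτ : IsStopTime G τ) (hκ : IsStopTime G κ) :
    IsStopTime G fun ω => min (τ ω) (κ ω) := by
  intro t
  simp only [min_le_iff, ofPred_or]
  exact (hτ t).union (hκ t)

lemma IsStopTime.measurableSet_ge (hG : Monotone G) (hτ : IsStopTime G τ) (t : ℝ≥0) :
    MeasurableSet[G t] {ω | (t : ℝ≥0∞) ≤ τ ω} := by
  have : {ω | (t : ℝ≥0∞) ≤ τ ω} =
      (⋃ (r : ℚ) (_ : Real.toNNReal r < t), {ω | τ ω ≤ Real.toNNReal r})ᶜ := by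
    ext ω
    simp only [mem_ofPred_eq, mem_compl_iff, mem_iUnion, exists_prop, not_exists, not_and,
      not_le]
    constructor
    · exact fun h r hrt => (ENNReal.coe_lt_coe.2 hrt).trans_le h
    · intro h
      by_contra! hτt
      obtain ⟨r, -, hτr, hrt⟩ := ENNReal.lt_iff_exists_rat_btwn.1 hτt
      exact (h r (ENNReal.coe_lt_coe.1 hrt)).not_ge hτr.le
  rw [this]
  exact (MeasurableSet.iUnion fun r => .iUnion fun hr => hG hr.le _ (hτ _)).compl

lemma IsStopTime.measurableSet_lt_inter_le (hG : Monotone G) (hτ : IsStopTime G τ)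
    (hκ : IsStopTime G κ) (t : ℝ≥0) :
    MeasurableSet[G t] ({ω | τ ω < κ ω} ∩ {ω | τ ω ≤ t}) := by
  have : {ω | τ ω < κ ω} ∩ {ω | τ ω ≤ t} = ({ω | τ ω ≤ t} ∩ {ω | κ ω ≤ t}ᶜ) ∪
      ⋃ (r : ℚ) (_ : Real.toNNReal r ≤ t),
        {ω | τ ω ≤ Real.toNNReal r} ∩ {ω | κ ω ≤ Real.toNNReal r}ᶜ := by
    ext ω
    simp only [mem_inter_iff, mem_union, mem_iUnion, mem_compl_iff, mem_ofPred_eq, not_le,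
      exists_prop]
    constructor
    · rintro ⟨hτκ, hτt⟩
      rcases lt_or_ge (t : ℝ≥0∞) (κ ω) with htκ | hκt
      · exact .inl ⟨hτt, htκ⟩
      · obtain ⟨r, -, hτr, hrκ⟩ := ENNReal.lt_iff_exists_rat_btwn.1 hτκ
        exact .inr ⟨r, ENNReal.coe_le_coe.1 (hrκ.le.trans hκt), hτr.le, hrκ⟩
    · rintro (⟨hτt, htκ⟩ | ⟨r, hrt, hτr, hrκ⟩)
      · exact ⟨hτt.trans_lt htκ, hτt⟩
      · exact ⟨hτr.trans_lt hrκ, hτr.trans (ENNReal.coe_le_coe.2 hrt)⟩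
  rw [this]
  exact ((hτ t).inter (hκ t).compl).union
    (.iUnion fun r => .iUnion fun hr => hG hr _ ((hτ _).inter (hκ _).compl))

lemma IsStopTime.measurable_min_const (hG : Monotone G) (hτ : IsStopTime G τ) (q : ℝ≥0) :
    Measurable[G q] fun ω => min (τ ω) q := by
  refine measurable_of_Iic fun c => ?_
  rcases le_or_gt (q : ℝ≥0∞) c with hqc | hcq
  · convert MeasurableSet.univ
    exact eq_univ_of_forall fun ω => (min_le_right _ _).trans hqc
  · lift c to ℝ≥0 using hcq.ne_top
    have : (fun ω => min (τ ω) q) ⁻¹' Iic (c : ℝ≥0∞) = {ω | τ ω ≤ c} := by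
      ext ω
      simp [hcq.not_ge]
    rw [this]
    exact hG (ENNReal.coe_lt_coe.1 hcq).le _ (hτ c)

lemma isStopTime_plusFilt_of_measurableSet_lt (F : Filtration ℝ≥0 m0)
    (hτ : ∀ p : ℝ≥0, MeasurableSet[F p] {ω | τ ω < p}) : IsStopTime (plusFilt F) τ := by
  refine fun t => measurableSet_plusFilt F fun s hts => ?_
  have : {ω | τ ω ≤ t} =
      ⋂ (r : ℚ) (_ : t < Real.toNNReal r ∧ Real.toNNReal r ≤ s), {ω | τ ω < Real.toNNReal r} := by
    ext ω
    simp only [mem_ofPred_eq, mem_iInter, and_imp]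
    refine ⟨fun h r htr _ => h.trans_lt (ENNReal.coe_lt_coe.2 htr), fun h => ?_⟩
    by_contra! htτ
    obtain ⟨r, -, htr, hrs⟩ :=
      ENNReal.lt_iff_exists_rat_btwn.1 (lt_min htτ (ENNReal.coe_lt_coe.2 hts))
    exact (h r (ENNReal.coe_lt_coe.1 htr) (ENNReal.coe_le_coe.1 (hrs.le.trans (min_le_right _ _))))
      |>.not_gt (hrs.trans_le (min_le_left _ _))
  rw [this]
  exact .iInter fun r => .iInter fun hr => F.mono hr.2 _ (hτ _)

end StopTime

section FirstNegTime

variable {X : ℝ≥0 → Ω → ℝ} {ω : Ω}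

noncomputable def firstNegTime (X : ℝ≥0 → Ω → ℝ) (ω : Ω) : ℝ≥0∞ :=
  ⨅ (t : ℝ≥0) (_ : X t ω < 0), (t : ℝ≥0∞)

lemma firstNegTime_le {t : ℝ≥0} (h : X t ω < 0) : firstNegTime X ω ≤ t :=
  iInf₂_le t h

lemma firstNegTime_eq_top (h : ∀ t, 0 ≤ X t ω) : firstNegTime X ω = ⊤ :=
  iInf₂_eq_top.2 fun t ht => absurd ht (h t).not_gt

lemma firstNegTime_lt_iff (hX : ∀ t, ContinuousWithinAt (X · ω) (Ici t) t) {u : ℝ≥0∞} :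
    firstNegTime X ω < u ↔ ∃ r : ℚ, (Real.toNNReal r : ℝ≥0∞) < u ∧ X (Real.toNNReal r) ω < 0 := by
  refine ⟨fun h => ?_, fun ⟨r, hru, hr⟩ => (firstNegTime_le hr).trans_lt hru⟩
  obtain ⟨t, ht⟩ := iInf_lt_iff.1 h
  obtain ⟨hneg, htu⟩ := iInf_lt_iff.1 ht
  obtain ⟨s, hts, hsu⟩ := ENNReal.lt_iff_exists_nnreal_btwn.1 htu
  have hev : ∀ᶠ v in 𝓝[>] t, X v ω < 0 ∧ v < s :=
    (((hX t).eventually_lt_const hneg).filter_mono (nhdsWithin_mono _ Ioi_subset_Ici_self)).and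
      (mem_nhdsWithin_of_mem_nhds (Iio_mem_nhds (ENNReal.coe_lt_coe.1 hts)))
  obtain ⟨w, htw, hw⟩ := mem_nhdsGT_iff_exists_Ioo_subset.1 hev
  obtain ⟨r, -, htr, hrw⟩ := (NNReal.lt_iff_exists_rat_btwn _ _).1 htw
  obtain ⟨hXr, hrs⟩ := hw ⟨htr, hrw⟩
  exact ⟨r, (ENNReal.coe_lt_coe.2 hrs).trans hsu, hXr⟩

lemma nonneg_of_le_firstNegTime (hX : Continuous (X · ω)) (h0 : 0 ≤ X 0 ω) {w : ℝ≥0}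
    (hw : (w : ℝ≥0∞) ≤ firstNegTime X ω) : 0 ≤ X w ω := by
  by_contra! hneg
  have hw0 : 0 < w := pos_iff_ne_zero.2 fun h => (h ▸ hneg).not_ge h0
  have : NeBot (𝓝[<] w) := nhdsLT_neBot_of_exists_lt ⟨0, hw0⟩
  obtain ⟨v, hv, hvw⟩ :=
    ((((hX.tendsto w).eventually_lt_const hneg).filter_mono nhdsWithin_le_nhds).and
      (eventually_mem_nhdsWithin (s := Iio w))).exists
  exact (hw.trans (firstNegTime_le hv)).not_gt (ENNReal.coe_lt_coe.2 hvw)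

lemma isStopTime_firstNegTime (F : Filtration ℝ≥0 m0)
    (hrc : ∀ ω t, ContinuousWithinAt (X · ω) (Ici t) t)
    (hX : ∀ q, Measurable[plusFilt F q] (X q)) : IsStopTime (plusFilt F) (firstNegTime X) := by
  refine isStopTime_plusFilt_of_measurableSet_lt F fun p => ?_
  have : {ω | firstNegTime X ω < p} =
      ⋃ (r : ℚ) (_ : Real.toNNReal r < p), {ω | X (Real.toNNReal r) ω < 0} := by
    ext ω
    simp only [mem_ofPred_eq, mem_iUnion, exists_prop, firstNegTime_lt_iff (hrc ω),
      ENNReal.coe_lt_coe]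
  rw [this]
  exact .iUnion fun r => .iUnion fun hr => plusFilt_le_of_lt F hr _ (hX _ measurableSet_Iio)

end FirstNegTime

section RightContinuous

variable {α E : Type*} [mα : MeasurableSpace α] [TopologicalSpace E]
  [TopologicalSpace.PseudoMetrizableSpace E]
  [MeasurableSpace E] [BorelSpace E]

lemma measurable_comp_of_rightContinuous {X : ℝ≥0 → α → E}
    (hrc : ∀ ω t, ContinuousWithinAt (X · ω) (Ici t) t) {q : ℝ≥0}
    (hX : ∀ v ≤ q, Measurable (X v)) {ρ : α → ℝ≥0} (hρ : Measurable ρ) (hρq : ∀ ω, ρ ω ≤ q) :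
    Measurable fun ω => X (ρ ω) ω := by
  -- approximate `ρ` from above by random times with countably many values
  have hmeas (n : ℕ) : Measurable fun ω => X (min q (⌈ρ ω * (n + 1)⌉₊ / (n + 1))) ω := by
    have : Measurable fun p : α × ℕ => X (min q (p.2 / (n + 1))) p.1 :=
      measurable_from_prod_countable_left fun k => hX (min q (k / (n + 1))) (min_le_left _ _)
    have hk : Measurable fun ω => ⌈ρ ω * (n + 1)⌉₊ := (hρ.mul_const ((n : ℝ≥0) + 1)).nat_ceil
    exact (this.comp (measurable_id.prodMk hk) :)
  have hlim (ω : α) :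
      Tendsto (fun n : ℕ => min q (⌈ρ ω * (n + 1)⌉₊ / (n + 1))) atTop (𝓝[≥] ρ ω) := by
    have hge (n : ℕ) : ρ ω ≤ min q (⌈ρ ω * (n + 1)⌉₊ / (n + 1)) :=
      le_min (hρq ω) ((le_div_iff₀ (by positivity)).2 (Nat.le_ceil _))
    have hle (n : ℕ) : min q (⌈ρ ω * (n + 1)⌉₊ / (n + 1)) ≤ ρ ω + 1 / (n + 1) := by
      refine (min_le_right _ _).trans ?_
      rw [div_le_iff₀ (by positivity), add_mul, one_div, inv_mul_cancel₀ (by positivity)]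
      exact (Nat.ceil_lt_add_one zero_le).le
    have hup : Tendsto (fun n : ℕ => ρ ω + 1 / (n + 1)) atTop (𝓝 (ρ ω)) := by
      simpa using (tendsto_one_div_add_atTop_nhds_zero_nat (𝕜 := ℝ≥0)).const_add (ρ ω)
    exact tendsto_nhdsWithin_iff.2
      ⟨tendsto_of_tendsto_of_tendsto_of_le_of_le tendsto_const_nhds hup hge hle,
        .of_forall hge⟩
  exact measurable_of_tendsto_metrizable' atTop hmeas
    (tendsto_pi_nhds.2 fun ω => (hrc ω (ρ ω)).tendsto.comp (hlim ω))

end RightContinuous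

lemma continuous_toNNReal_min (a : ℝ≥0∞) : Continuous fun s : ℝ≥0 => (min a s).toNNReal :=
  ENNReal.continuousOn_toNNReal.comp_continuous (continuous_const.min ENNReal.continuous_coe)
    fun _ => (min_lt_of_right_lt ENNReal.coe_lt_top).ne

lemma monotone_toNNReal_min (a : ℝ≥0∞) : Monotone fun s : ℝ≥0 => (min a s).toNNReal :=
  fun _ _ h => ENNReal.toNNReal_mono (min_lt_of_right_lt ENNReal.coe_lt_top).ne
    (min_le_min_left _ (ENNReal.coe_le_coe.2 h))

section Wealth

variable {F : Filtration ℝ≥0 m0} {d : ℕ} (S : ℝ≥0 → Ω → Fin d → ℝ) (x : ℝ)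
  (H : SimpleStrategy F d)

lemma wealth_zero (ω : Ω) : wealth S x H 0 ω = x := by
  simp [wealth]

lemma tendsto_wealth {l : Filter ℝ≥0} {t₀ : ℝ≥0} {ω : Ω}
    (hS : ∀ a : ℝ≥0∞, Tendsto (fun s : ℝ≥0 => S (min a (s : ℝ≥0∞)).toNNReal ω) l
      (𝓝 (S (min a (t₀ : ℝ≥0∞)).toNNReal ω))) :
    Tendsto (fun t => wealth S x H t ω) l (𝓝 (wealth S x H t₀ ω)) := by
  refine tendsto_const_nhds.add (tendsto_finsetSum _ fun i _ =>
    tendsto_finsetSum _ fun j _ => .const_mul _ (.sub ?_ ?_)) <;>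
  exact ((continuous_apply j).tendsto _).comp (hS _)

lemma continuous_wealth {ω : Ω} (hS : Continuous (S · ω)) : Continuous (wealth S x H · ω) :=
  continuous_iff_continuousAt.2 fun _ =>
    tendsto_wealth S x H fun a => (hS.comp (continuous_toNNReal_min a)).continuousAt

lemma continuousWithinAt_wealth {ω : Ω} (hS : ∀ t, ContinuousWithinAt (S · ω) (Ici t) t)
    (t : ℝ≥0) : ContinuousWithinAt (wealth S x H · ω) (Ici t) t :=
  tendsto_wealth S x H fun a => (hS _).comp
    (continuous_toNNReal_min a).continuousWithinAt fun _ hs => monotone_toNNReal_min a hs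

lemma SimpleStrategy.measurable_ite_h (i : ℕ) (q : ℝ≥0) :
    Measurable[plusFilt F q] fun ω => if H.τ i ω ≤ q then H.h i ω else 0 := by
  intro B hB
  have : (fun ω => if H.τ i ω ≤ q then H.h i ω else 0) ⁻¹' B =
      {ω | H.h i ω ∈ B} ∩ {ω | H.τ i ω ≤ q} ∪ {ω | H.τ i ω ≤ q}ᶜ ∩ {_ω | (0 : Fin d → ℝ) ∈ B} := by
    ext ω
    by_cases h : H.τ i ω ≤ q <;> simp [h]
  rw [this]
  exact (H.h_meas i B hB q).union ((H.tau_stop i q).compl.inter (.const _))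

lemma measurable_wealth (hadapted : ∀ t, StronglyMeasurable[F t] (S t))
    (hrc : ∀ ω t, ContinuousWithinAt (S · ω) (Ici t) t) (q : ℝ≥0) :
    Measurable[plusFilt F q] (wealth S x H q) := by
  -- the `i`-th increment vanishes unless `τ i ≤ q`, and `h i` is `F_{q+}`-measurable there
  have hrw : wealth S x H q = fun ω => x + ∑ i ∈ Finset.range H.n, ∑ j,
      (if H.τ i ω ≤ q then H.h i ω else 0) j *
        (S (min (H.τ (i + 1) ω) q).toNNReal ω j - S (min (H.τ i ω) q).toNNReal ω j) := by
    funext ω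
    refine congrArg (x + ·) (Finset.sum_congr rfl fun i _ => ?_)
    split_ifs with hi
    · rfl
    · have hqi := (not_le.1 hi).le
      simp [min_eq_right hqi, min_eq_right (hqi.trans (H.tau_mono ω i.le_succ))]
  have hSτ (i : ℕ) : Measurable[plusFilt F q] fun ω => S (min (H.τ i ω) q).toNNReal ω :=
    measurable_comp_of_rightContinuous (α := Ω) (mα := plusFilt F q) hrc
      (fun v hv => (hadapted v).measurable.mono (le_plusFilt_of_le F hv) le_rfl)
      ((H.tau_stop i).measurable_min_const (plusFilt_mono F) q).ennreal_toNNReal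
      fun ω => by simpa using ENNReal.toNNReal_mono ENNReal.coe_ne_top (min_le_right (H.τ i ω) q)
  rw [hrw]
  refine measurable_const.add (Finset.measurable_sum _ fun i _ =>
    Finset.measurable_sum _ fun j _ => ?_)
  exact ((measurable_pi_apply j).comp (H.measurable_ite_h i q)).mul
    (((measurable_pi_apply j).comp (hSτ (i + 1))).sub ((measurable_pi_apply j).comp (hSτ i)))

lemma isStopTime_firstNegTime_wealth (hadapted : ∀ t, StronglyMeasurable[F t] (S t))
    (hrc : ∀ ω t, ContinuousWithinAt (S · ω) (Ici t) t) :
    IsStopTime (plusFilt F) (firstNegTime (wealth S x H)) :=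
  isStopTime_firstNegTime F (fun ω => continuousWithinAt_wealth S x H (hrc ω))
    (measurable_wealth S x H hadapted hrc)

end Wealth

namespace SimpleStrategy

variable {F : Filtration ℝ≥0 m0} {d : ℕ}

lemma memStopSigmaPlus_min_ite {β : Type*} [Zero β] {τ κ : Ω → ℝ≥0∞} {h : Ω → β} {B : Set β}
    (hτ : IsStopTime (plusFilt F) τ) (hκ : IsStopTime (plusFilt F) κ)
    (hh : MemStopSigmaPlus F τ {ω | h ω ∈ B}) :
    MemStopSigmaPlus F (fun ω => min (τ ω) (κ ω)) {ω | (if τ ω < κ ω then h ω else 0) ∈ B} := by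
  intro t
  have : {ω | (if τ ω < κ ω then h ω else 0) ∈ B} ∩ {ω | min (τ ω) (κ ω) ≤ t} =
      {ω | h ω ∈ B} ∩ {ω | τ ω ≤ t} ∩ ({ω | τ ω < κ ω} ∩ {ω | τ ω ≤ t}) ∪
        {_ω | (0 : β) ∈ B} ∩ ({ω | κ ω ≤ t} \ ({ω | τ ω < κ ω} ∩ {ω | τ ω ≤ t})) := by
    ext ω
    simp only [mem_inter_iff, mem_union, Set.mem_sdiff, mem_ofPred_eq]
    split_ifs with hc <;> grind
  rw [this]
  have hlt := hτ.measurableSet_lt_inter_le (plusFilt_mono F) hκ t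
  exact ((hh t).inter hlt).union ((MeasurableSet.const _).inter ((hκ t).diff hlt))

/-- Zeroing `h i` from `κ` on does not change the wealth; it makes `h i` measurable
with respect to `F_{min (τ i) κ +}`. -/
noncomputable def stopped (H : SimpleStrategy F d) (κ : Ω → ℝ≥0∞)
    (hκ : IsStopTime (plusFilt F) κ) : SimpleStrategy F d where
  n := H.n
  τ i ω := min (H.τ i ω) (κ ω)
  h i ω := if H.τ i ω < κ ω then H.h i ω else 0
  tau_zero ω := by simp [H.tau_zero]
  tau_mono ω _ _ hij := min_le_min_right _ (H.tau_mono ω hij)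
  tau_stop i := (H.tau_stop i).min hκ
  h_meas i B hB := memStopSigmaPlus_min_ite (H.tau_stop i) hκ (H.h_meas i B hB)

lemma wealth_stopped (S : ℝ≥0 → Ω → Fin d → ℝ) (x : ℝ) (H : SimpleStrategy F d)
    {κ : Ω → ℝ≥0∞} (hκ : IsStopTime (plusFilt F) κ) (t : ℝ≥0) (ω : Ω) :
    wealth S x (H.stopped κ hκ) t ω = wealth S x H (min (κ ω) t).toNNReal ω := by
  have hcoe : ((min (κ ω) t).toNNReal : ℝ≥0∞) = min (κ ω) t :=
    ENNReal.coe_toNNReal (min_lt_of_right_lt ENNReal.coe_lt_top).ne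
  simp only [wealth, stopped, hcoe, ← min_assoc]
  refine congrArg (x + ·) (Finset.sum_congr rfl fun i _ => ?_)
  split_ifs with hc
  · rfl
  · have hκi := not_lt.1 hc
    simp [min_eq_right hκi, min_eq_right (hκi.trans (H.tau_mono ω i.le_succ))]

end SimpleStrategy

section Superhedge

variable {F : Filtration ℝ≥0 m0} {d : ℕ} {S : ℝ≥0 → Ω → Fin d → ℝ} {Ps : Set (Measure Ω)}

lemma Superhedges.mono {Qs : Set (Measure Ω)} {x : ℝ} {H : SimpleStrategy F d} {T : ℝ≥0}
    {f : Ω → ℝ} (h : Superhedges S Ps x H T f) (hQs : Qs ⊆ Ps) : Superhedges S Qs x H T f :=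
  ⟨fun P hP => h.1 P (hQs hP), fun P hP => h.2 P (hQs hP)⟩

lemma exists_superhedges_indicator (hadapted : ∀ t, StronglyMeasurable[F t] (S t))
    (hrc : ∀ ω t, ContinuousWithinAt (S · ω) (Ici t) t)
    (hcont : ∀ P ∈ Ps, ∀ᵐ ω ∂P, Continuous (S · ω)) {x : ℝ} (hx : 0 ≤ x)
    (H : SimpleStrategy F d) (T : ℝ≥0) {f : Ω → ℝ} {A : Set Ω}
    (hA : ∀ ω ∈ A, T ≤ firstNegTime (wealth S x H) ω ∧ f ω ≤ wealth S x H T ω) :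
    ∃ H' : SimpleStrategy F d, Superhedges S Ps x H' (T + 1) (A.indicator f) := by
  have hκ : IsStopTime (plusFilt F) fun ω => min (firstNegTime (wealth S x H) ω) T :=
    (isStopTime_firstNegTime_wealth S x H hadapted hrc).min (isStopTime_const _)
  have hnonneg (ω : Ω) (hω : Continuous (S · ω)) (t : ℝ≥0) :
      0 ≤ wealth S x (H.stopped _ hκ) t ω := by
    rw [SimpleStrategy.wealth_stopped]
    refine nonneg_of_le_firstNegTime (continuous_wealth S x H hω) (by rwa [wealth_zero]) ?_
    rw [ENNReal.coe_toNNReal (min_lt_of_right_lt ENNReal.coe_lt_top).ne]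
    exact (min_le_left _ _).trans (min_le_left _ _)
  refine ⟨H.stopped _ hκ, fun P hP => (hcont P hP).mono fun ω hω => hnonneg ω hω,
    fun P hP => (hcont P hP).mono fun ω hω => ?_⟩
  by_cases hωA : ω ∈ A
  · obtain ⟨hT, hf⟩ := hA ω hωA
    rwa [indicator_of_mem hωA, SimpleStrategy.wealth_stopped, min_eq_right hT,
      min_eq_left (ENNReal.coe_le_coe.2 le_self_add), ENNReal.toNNReal_coe]
  · rw [indicator_of_notMem hωA]
    exact hnonneg ω hω _

lemma NA1_of_forall_NA1_singleton (h : ∀ P ∈ Ps, NA1 F S {P}) : NA1 F S Ps := by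
  intro T f hfm hf0 hsup P hP
  refine h P hP T f hfm hf0 (fun ε hε => ?_) P rfl
  obtain ⟨x, hx0, hxε, H, hH⟩ := hsup ε hε
  exact ⟨x, hx0, hxε, H, hH.mono (singleton_subset_iff.2 hP)⟩

lemma NA1.singleton (hNA : NA1 F S Ps) (hadapted : ∀ t, StronglyMeasurable[F t] (S t))
    (hrc : ∀ ω t, ContinuousWithinAt (S · ω) (Ici t) t)
    (hcont : ∀ P ∈ Ps, ∀ᵐ ω ∂P, Continuous (S · ω)) {P : Measure Ω} (hP : P ∈ Ps) :
    NA1 F S {P} := by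
  rintro T f hfm hf0 hsup P rfl
  choose x hx0 hxlt H hH using fun n : ℕ => hsup (1 / (n + 1)) Nat.one_div_pos_of_nat
  let A (n : ℕ) : Set Ω :=
    {ω | T ≤ firstNegTime (wealth S (x n) (H n)) ω ∧ f ω ≤ wealth S (x n) (H n) T ω}
  have hA_ae (n : ℕ) : ∀ᵐ ω ∂P, ω ∈ A n := by
    filter_upwards [(hH n).1 P rfl, (hH n).2 P rfl] with ω hpos hf
    exact ⟨by simp [firstNegTime_eq_top hpos], hf⟩
  -- `wealth` at `T` is only `F_{T+}`-measurable, hence the claim is posed at horizon `T + 1`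
  have hle : plusFilt F T ≤ F (T + 1) := plusFilt_le_of_lt F (lt_add_one T)
  have hA_meas (n : ℕ) : MeasurableSet[F (T + 1)] (A n) :=
    (hle _ ((isStopTime_firstNegTime_wealth S _ _ hadapted hrc).measurableSet_ge
      (plusFilt_mono F) T)).inter
      (measurableSet_le (hfm.measurable.mono (F.mono le_self_add) le_rfl)
        ((measurable_wealth S _ _ hadapted hrc T).mono hle le_rfl))
  have hg : ∀ᵐ ω ∂P, (⋂ n, A n).indicator f ω = 0 := by
    refine ae_iff.2 (hNA (T + 1) _ ((hfm.mono (F.mono le_self_add)).indicator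
      (.iInter hA_meas)) (indicator_nonneg fun ω _ => hf0 ω) (fun ε hε => ?_) P hP)
    obtain ⟨n, hn⟩ := exists_nat_one_div_lt hε
    obtain ⟨H', hH'⟩ := exists_superhedges_indicator hadapted hrc hcont (hx0 n) (H n) T
      (A := ⋂ m, A m) fun ω hω => mem_iInter.1 hω n
    exact ⟨x n, hx0 n, (hxlt n).trans hn, H', hH'⟩
  refine ae_iff.1 ?_
  filter_upwards [hg, ae_all_iff.2 hA_ae] with ω hgω hAω
  rwa [indicator_of_mem (mem_iInter.2 hAω)] at hgω

end Superhedge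

theorem NA1_family_iff_NA1_individual_general {d : ℕ} (F : Filtration ℝ≥0 m0)
    (S : ℝ≥0 → Ω → Fin d → ℝ) (Ps : Set (Measure Ω))
    (hadapted : ∀ t : ℝ≥0, StronglyMeasurable[F t] (S t))
    (hrightcont : ∀ ω, ∀ t : ℝ≥0, ContinuousWithinAt (fun s => S s ω) (Set.Ici t) t)
    (hcont : ∀ P ∈ Ps, ∀ᵐ ω ∂P, Continuous fun t : ℝ≥0 => S t ω) :
    NA1 F S Ps ↔ ∀ P ∈ Ps, NA1 F S {P} :=
  ⟨fun h _ hP => h.singleton hadapted hrightcont hcont hP, NA1_of_forall_NA1_singleton⟩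

/-- `NA₁(Ps)` holds if and only if `NA₁(P)` holds for every `P ∈ Ps`. -/
theorem NA1_family_iff_NA1_individual {d : ℕ} (F : Filtration ℝ≥0 m0)
    (S : ℝ≥0 → Ω → Fin d → ℝ) (Ps : Set (Measure Ω)) (hPs : Ps.Nonempty)
    (hprob : ∀ P ∈ Ps, IsProbabilityMeasure P)
    (hadapted : ∀ t : ℝ≥0, StronglyMeasurable[F t] (S t))
    (hrightcont : ∀ ω, ∀ t : ℝ≥0, ContinuousWithinAt (fun s => S s ω) (Set.Ici t) t)
    (hcont : ∀ P ∈ Ps, ∀ᵐ ω ∂P, Continuous fun t : ℝ≥0 => S t ω) :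
    NA1 F S Ps ↔ ∀ P ∈ Ps, NA1 F S {P} :=
  NA1_family_iff_NA1_individual_general F S Ps hadapted hrightcont hcont
end
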